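/- arXiv:1503.01372 — 3 statements merged into one kernel-verified Lean document; each statement's English description precedes it below -/
import Mathlib

section
/- Let α ∈ (0,1), and for a ∈ (0,1/2) set b = a + 2^α a^{1+α} (so b = f(a) for the LSV map). If μ is a measure on [0,1] with density h satisfying h(x)·x^α → C₀ > 0 as x → 0⁺, then lim_{a→0⁺} μ([a,b))/a = C₀·2^α, that is, μ([a, a+2^α a^{1+α})) ∼ C₀ 2^α a as a → 0⁺. -/
open Set Filter Topology MeasureTheory

/-- With `μ` the measure with density `h`, `h(x) x^α → C₀ > 0` as `x → 0⁺`, and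
`b = a + 2^α a^{1+α}`, one has `μ([a,b))/a → C₀ 2^α` as `a → 0⁺`. -/
theorem measure_cluster_interval_asymptotics
    (α C₀ : ℝ) (hα : α ∈ Set.Ioo (0:ℝ) 1) (hC₀ : 0 < C₀)
    (h : ℝ → ℝ) (hmeas : Measurable h)
    (hpos : ∀ x ∈ Set.Ioc (0:ℝ) 1, 0 < h x)
    (hlim : Tendsto (fun x : ℝ => h x * x^α) (nhdsWithin 0 (Set.Ioi 0)) (nhds C₀))
    (μ : Measure ℝ)
    (hμ : μ = volume.withDensity (fun x => ENNReal.ofReal (h x))) :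
    Tendsto (fun a : ℝ => (μ (Set.Ico a (a + 2^α * a^(1+α)))).toReal / a)
      (nhdsWithin 0 (Set.Ioi 0)) (nhds (C₀ * 2^α)) := by
  obtain ⟨hα0, hα1⟩ := hα
  have h2 : (0:ℝ) < (2:ℝ)^α := Real.rpow_pos_of_pos two_pos α
  -- limit of b as a → 0⁺
  have hb0 : Tendsto (fun a : ℝ => a + 2^α * a^(1+α)) (nhdsWithin 0 (Set.Ioi 0)) (nhds 0) := by
    have h1 : Tendsto (fun a : ℝ => a^(1+α)) (nhds (0:ℝ)) (nhds ((0:ℝ)^(1+α))) :=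
      (Real.continuousAt_rpow_const 0 (1+α) (Or.inr (by linarith))).tendsto
    rw [Real.zero_rpow (by linarith)] at h1
    have h3 : Tendsto (fun a : ℝ => a + 2^α * a^(1+α)) (nhds 0) (nhds (0 + 2^α * 0)) :=
      tendsto_id.add (tendsto_const_nhds.mul h1)
    rw [show (0:ℝ) + 2^α * 0 = 0 by ring] at h3
    exact h3.mono_left nhdsWithin_le_nhds
  -- a^α → 0 as a → 0⁺
  have hpow0 : Tendsto (fun a : ℝ => a^α) (nhdsWithin 0 (Set.Ioi 0)) (nhds 0) := by
    have h1 : Tendsto (fun a : ℝ => a^α) (nhds (0:ℝ)) (nhds ((0:ℝ)^α)) :=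
      (Real.continuousAt_rpow_const 0 α (Or.inr hα0.le)).tendsto
    rw [Real.zero_rpow (ne_of_gt hα0)] at h1
    exact h1.mono_left nhdsWithin_le_nhds
  -- a / b → 1 as a → 0⁺
  have hab1 : Tendsto (fun a : ℝ => a / (a + 2^α * a^(1+α))) (nhdsWithin 0 (Set.Ioi 0))
      (nhds 1) := by
    have heq : ∀ a ∈ Set.Ioi (0:ℝ),
        a / (a + 2^α * a^(1+α)) = 1 / (1 + 2^α * a^α) := by
      intro a ha
      have ha' : (0:ℝ) < a := ha
      have h1 : a^(1+α) = a * a^α := by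
        rw [Real.rpow_add ha', Real.rpow_one]
      have hden : (0:ℝ) < 1 + 2^α * a^α := by positivity
      rw [h1]
      rw [show a + 2^α * (a * a^α) = a * (1 + 2^α * a^α) by ring]
      rw [show a / (a * (1 + 2^α * a^α)) = (a * 1) / (a * (1 + 2^α * a^α)) by rw [mul_one],
        mul_div_mul_left _ _ ha'.ne']
    have h1 : Tendsto (fun a : ℝ => 1 / (1 + 2^α * a^α)) (nhdsWithin 0 (Set.Ioi 0))
        (nhds (1 / (1 + 2^α * 0))) := by
      apply Tendsto.div tendsto_const_nhds
        (tendsto_const_nhds.add (tendsto_const_nhds.mul hpow0))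
      norm_num
    rw [show (1:ℝ) / (1 + 2^α * 0) = 1 by norm_num] at h1
    exact Tendsto.congr' (eventually_nhdsWithin_of_forall fun a ha => (heq a ha).symm) h1
  -- (a/b)^α → 1
  have hab1' : Tendsto (fun a : ℝ => (a / (a + 2^α * a^(1+α)))^α) (nhdsWithin 0 (Set.Ioi 0))
      (nhds 1) := by
    have hc : Tendsto (fun t : ℝ => t^α) (nhds (1:ℝ)) (nhds ((1:ℝ)^α)) :=
      (Real.continuousAt_rpow_const 1 α (Or.inl one_ne_zero)).tendsto
    rw [Real.one_rpow] at hc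
    exact hc.comp hab1
  rw [Metric.tendsto_nhds]
  intro ε hε
  set L := C₀ * 2^α with hLdef
  set ε₁ := min (ε / (2 * 2^α)) (C₀/2) with hε₁def
  have hε₁pos : 0 < ε₁ := lt_min (by positivity) (by positivity)
  have hε₁C : ε₁ ≤ C₀/2 := min_le_right _ _
  have hε₁e : ε₁ * 2^α ≤ ε/2 := by
    calc ε₁ * 2^α ≤ ε / (2*2^α) * 2^α := by gcongr; exact min_le_left _ _
    _ = ε/2 := by
        rw [div_mul_eq_mul_div, mul_comm (2:ℝ) ((2:ℝ)^α), ← div_div,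
          mul_div_assoc, div_self h2.ne', mul_one]
  -- get δ from hlim
  obtain ⟨δ, hδpos, hδ⟩ := Metric.tendsto_nhdsWithin_nhds.mp hlim ε₁ hε₁pos
  -- eventual facts
  have E2 : ∀ᶠ a in nhdsWithin (0:ℝ) (Set.Ioi 0), a + 2^α * a^(1+α) < δ :=
    hb0.eventually (eventually_lt_nhds hδpos)
  have E3 : ∀ᶠ a in nhdsWithin (0:ℝ) (Set.Ioi 0),
      L - ε < (C₀ - ε₁) * 2^α * (a / (a + 2^α * a^(1+α)))^α := by
    have hlim3 : Tendsto (fun a : ℝ => (C₀ - ε₁) * 2^α * (a / (a + 2^α * a^(1+α)))^α)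
        (nhdsWithin 0 (Set.Ioi 0)) (nhds ((C₀ - ε₁) * 2^α * 1)) :=
      tendsto_const_nhds.mul hab1'
    have hgt : L - ε < (C₀ - ε₁) * 2^α * 1 := by
      have he : (C₀ - ε₁) * 2^α = L - ε₁ * 2^α := by rw [hLdef]; ring
      rw [mul_one, he]
      linarith
    exact hlim3.eventually (eventually_gt_nhds hgt)
  filter_upwards [self_mem_nhdsWithin, E2, E3] with a ha hbδ hlow
  have ha0 : (0:ℝ) < a := ha
  set b := a + 2^α * a^(1+α) with hbdef
  have hba : b - a = 2^α * a^(1+α) := by rw [hbdef]; ring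
  have hIa : (0:ℝ) < 2^α * a^(1+α) := by positivity
  have hab : a < b := by rw [hbdef]; linarith
  have hb0' : (0:ℝ) < b := lt_trans ha0 hab
  have haα : (0:ℝ) < a^α := Real.rpow_pos_of_pos ha0 α
  have hbα : (0:ℝ) < b^α := Real.rpow_pos_of_pos hb0' α
  -- pointwise bounds on h on [a,b)
  have hpt : ∀ x ∈ Set.Ico a b, (C₀ - ε₁) / b^α ≤ h x ∧ h x ≤ (C₀ + ε₁) / a^α := by
    intro x hx
    have hx0 : (0:ℝ) < x := lt_of_lt_of_le ha0 hx.1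
    have hxδ : dist x 0 < δ := by
      rw [Real.dist_eq, sub_zero, abs_of_pos hx0]
      exact lt_trans hx.2 hbδ
    have hxα : (0:ℝ) < x^α := Real.rpow_pos_of_pos hx0 α
    have hd := hδ hx0 hxδ
    rw [Real.dist_eq, abs_sub_lt_iff] at hd
    obtain ⟨hd1, hd2⟩ := hd
    have hhx0 : 0 < h x := by
      by_contra hcon
      push_neg at hcon
      nlinarith
    constructor
    · have hxb : x^α ≤ b^α := Real.rpow_le_rpow hx0.le (le_of_lt hx.2) hα0.le
      rw [div_le_iff₀ hbα]
      calc C₀ - ε₁ ≤ h x * x^α := by linarith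
        _ ≤ h x * b^α := by gcongr
    · have hax : a^α ≤ x^α := Real.rpow_le_rpow ha0.le hx.1 hα0.le
      rw [le_div_iff₀ haα]
      calc h x * a^α ≤ h x * x^α := by gcongr
        _ ≤ C₀ + ε₁ := by linarith
  have hC1 : (0:ℝ) ≤ (C₀ + ε₁) / a^α := div_nonneg (by linarith) haα.le
  have hC2 : (0:ℝ) ≤ (C₀ - ε₁) / b^α := div_nonneg (by linarith) hbα.le
  have hba0 : (0:ℝ) ≤ b - a := by linarith
  -- measure computation and bounds
  have hμab : μ (Set.Ico a b) = ∫⁻ x in Set.Ico a b, ENNReal.ofReal (h x) := by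
    rw [hμ, withDensity_apply _ measurableSet_Ico]
  have hupper : μ (Set.Ico a b) ≤ ENNReal.ofReal ((C₀ + ε₁) / a^α * (b - a)) := by
    rw [hμab]
    calc ∫⁻ x in Set.Ico a b, ENNReal.ofReal (h x)
        ≤ ∫⁻ _ in Set.Ico a b, ENNReal.ofReal ((C₀ + ε₁) / a^α) :=
          setLIntegral_mono measurable_const fun x hx =>
            ENNReal.ofReal_le_ofReal (hpt x hx).2
      _ = ENNReal.ofReal ((C₀ + ε₁) / a^α) * volume (Set.Ico a b) := setLIntegral_const _ _
      _ = ENNReal.ofReal ((C₀ + ε₁) / a^α * (b - a)) := by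
          rw [Real.volume_Ico, ← ENNReal.ofReal_mul hC1]
  have hlower : ENNReal.ofReal ((C₀ - ε₁) / b^α * (b - a)) ≤ μ (Set.Ico a b) := by
    rw [hμab]
    calc ENNReal.ofReal ((C₀ - ε₁) / b^α * (b - a))
        = ENNReal.ofReal ((C₀ - ε₁) / b^α) * volume (Set.Ico a b) := by
          rw [Real.volume_Ico, ← ENNReal.ofReal_mul hC2]
      _ = ∫⁻ _ in Set.Ico a b, ENNReal.ofReal ((C₀ - ε₁) / b^α) := (setLIntegral_const _ _).symm
      _ ≤ ∫⁻ x in Set.Ico a b, ENNReal.ofReal (h x) :=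
          setLIntegral_mono hmeas.ennreal_ofReal fun x hx =>
            ENNReal.ofReal_le_ofReal (hpt x hx).1
  have hfin : μ (Set.Ico a b) ≠ ⊤ :=
    ne_top_of_le_ne_top ENNReal.ofReal_ne_top hupper
  have hupR : (μ (Set.Ico a b)).toReal ≤ (C₀ + ε₁) / a^α * (b - a) :=
    ENNReal.toReal_le_of_le_ofReal (mul_nonneg hC1 hba0) hupper
  have hloR : (C₀ - ε₁) / b^α * (b - a) ≤ (μ (Set.Ico a b)).toReal :=
    (ENNReal.ofReal_le_iff_le_toReal hfin).mp hlower
  -- final arithmetic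
  have hone : a^(1+α) = a * a^α := by rw [Real.rpow_add ha0, Real.rpow_one]
  have hup' : (C₀ + ε₁) / a^α * (b - a) / a = (C₀ + ε₁) * 2^α := by
    rw [hba, hone]
    field_simp
  have hlo' : (C₀ - ε₁) / b^α * (b - a) / a = (C₀ - ε₁) * 2^α * (a / b)^α := by
    rw [hba, hone, Real.div_rpow ha0.le hb0'.le]
    field_simp
  have hdivU : (μ (Set.Ico a b)).toReal / a ≤ (C₀ + ε₁) * 2^α := by
    rw [← hup']; gcongr
  have hdivL : (C₀ - ε₁) * 2^α * (a / b)^α ≤ (μ (Set.Ico a b)).toReal / a := by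
    rw [← hlo']; gcongr
  have heq2 : (C₀ + ε₁) * 2^α = L + ε₁ * 2^α := by rw [hLdef]; ring
  rw [Real.dist_eq, abs_sub_lt_iff]
  constructor
  · linarith [hdivU, hε₁e]
  · linarith [hdivL, hlow]
end

section
/- Let μ be a measure on [0,1] with density h satisfying h(x) x^α → C₀ > 0 as x → 0⁺, α ∈ (0,1), and U = [0,b), A = [a,b) with b = a + 2^α a^{1+α}. Then lim_{b→0⁺} μ(U \ A)/μ(U) = 1, i.e. the ratio μ([0,a))/μ([0,b)) tends to 1 as a → 0⁺. -/
open Set Filter Topology MeasureTheory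

/-- With `μ` the measure with density `h`, `h(x) x^α → C₀ > 0` as `x → 0⁺`, and
`U = [0,b)`, `A = [a,b)` with `b = a + 2^α a^{1+α}`, the ratio
`μ(U \ A)/μ(U) = μ([0,a))/μ([0,b))` tends to `1` as `a → 0⁺`. -/
theorem measure_ratio_tendsto_one
    (α C₀ : ℝ) (hα : α ∈ Set.Ioo (0:ℝ) 1) (hC₀ : 0 < C₀)
    (h : ℝ → ℝ) (hmeas : Measurable h)
    (hpos : ∀ x ∈ Set.Ioc (0:ℝ) 1, 0 < h x)
    (hlim : Tendsto (fun x : ℝ => h x * x^α) (nhdsWithin 0 (Set.Ioi 0)) (nhds C₀))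
    (μ : Measure ℝ)
    (hμ : μ = volume.withDensity (fun x => ENNReal.ofReal (h x))) :
    Tendsto (fun a : ℝ =>
        (μ (Set.Ico 0 a)).toReal / (μ (Set.Ico 0 (a + 2^α * a^(1+α)))).toReal)
      (nhdsWithin 0 (Set.Ioi 0)) (nhds 1) := by
  obtain ⟨hα0, hα1⟩ := hα
  -- get δ with pointwise bounds on h
  obtain ⟨δ, hδ0, hδ⟩ : ∃ δ > 0, ∀ x : ℝ, 0 < x → x < δ →
      C₀/2 * x^(-α) ≤ h x ∧ h x ≤ 3/2 * C₀ * x^(-α) := by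
    rcases Metric.tendsto_nhdsWithin_nhds.mp hlim (C₀/2) (by linarith) with ⟨δ, hδ0, H⟩
    refine ⟨δ, hδ0, fun x hx hxδ => ?_⟩
    have hxa : (0:ℝ) < x ^ α := Real.rpow_pos_of_pos hx α
    have := H (by exact hx : x ∈ Set.Ioi (0:ℝ))
      (by simpa [Real.dist_eq, abs_of_pos hx] using hxδ)
    rw [Real.dist_eq, abs_lt] at this
    have hxneg : x ^ (-α) = (x ^ α)⁻¹ := Real.rpow_neg hx.le α
    constructor
    · rw [hxneg, mul_inv_le_iff₀ hxa]; nlinarith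
    · rw [hxneg, ← div_eq_mul_inv, le_div_iff₀ hxa]; nlinarith
  set a₀ : ℝ := min (1/2) (δ/2) with ha₀def
  have ha₀0 : 0 < a₀ := lt_min (by norm_num) (by linarith)
  -- the key pointwise facts, for each small a
  have key : ∀ a : ℝ, 0 < a → a < a₀ →
      (μ (Set.Ico 0 a)).toReal / (μ (Set.Ico 0 (a + 2^α * a^(1+α)))).toReal
        = 1 - (μ (Set.Ico a (a + 2^α * a^(1+α)))).toReal
              / (μ (Set.Ico 0 (a + 2^α * a^(1+α)))).toReal ∧
      (μ (Set.Ico a (a + 2^α * a^(1+α)))).toReal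
        / (μ (Set.Ico 0 (a + 2^α * a^(1+α)))).toReal ≤ 6 * 2^α * a^α := by
    intro a ha haa₀
    set b : ℝ := a + 2^α * a^(1+α) with hbdef
    have h2a : (0:ℝ) < 2^α * a^(1+α) :=
      mul_pos (Real.rpow_pos_of_pos two_pos α) (Real.rpow_pos_of_pos ha _)
    have hab : a < b := by simpa [hbdef] using h2a
    have hb0 : 0 < b := ha.trans hab
    have ha12 : a ≤ 1/2 := le_of_lt (lt_of_lt_of_le haa₀ (min_le_left _ _))
    have haδ2 : a < δ/2 := lt_of_lt_of_le haa₀ (min_le_right _ _)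
    have hb2a : b ≤ 2 * a := by
      have h1 : a^(1+α) = a * a^α := by
        rw [Real.rpow_add ha, Real.rpow_one]
      have h2 : (2:ℝ)^α * a^α = (2*a)^α := (Real.mul_rpow (by norm_num) ha.le).symm
      have h3 : (2*a)^α ≤ 1 := by
        have : (2*a) ≤ 1 := by linarith
        calc (2*a)^α ≤ 1^α := Real.rpow_le_rpow (by linarith) this hα0.le
        _ = 1 := Real.one_rpow α
      have : 2^α * a^(1+α) = (2*a)^α * a := by rw [h1, ← h2]; ring
      rw [hbdef, this]
      nlinarith
    have hbδ : b < δ := by linarith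
    -- measure as lintegral
    have hmeas' : Measurable fun x => ENNReal.ofReal (h x) := hmeas.ennreal_ofReal
    have hIco : ∀ s t : ℝ, μ (Set.Ico s t) = ∫⁻ x in Set.Ico s t, ENNReal.ofReal (h x) := by
      intro s t; rw [hμ, withDensity_apply _ measurableSet_Ico]
    -- upper bound for μ [a, b)
    have hN : μ (Set.Ico a b) ≤ ENNReal.ofReal (3/2 * C₀ * a^(-α)) * ENNReal.ofReal (b - a) := by
      rw [hIco]
      calc ∫⁻ x in Set.Ico a b, ENNReal.ofReal (h x)
          ≤ ∫⁻ _ in Set.Ico a b, ENNReal.ofReal (3/2 * C₀ * a^(-α)) := by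
            refine setLIntegral_mono measurable_const fun x hx => ?_
            refine ENNReal.ofReal_le_ofReal ?_
            have hx0 : 0 < x := lt_of_lt_of_le ha hx.1
            refine le_trans (hδ x hx0 (lt_of_lt_of_le hx.2 hbδ.le)).2 ?_
            have : x^(-α) ≤ a^(-α) :=
              Real.rpow_le_rpow_of_nonpos ha hx.1 (by linarith)
            nlinarith
        _ = ENNReal.ofReal (3/2 * C₀ * a^(-α)) * ENNReal.ofReal (b - a) := by
            rw [setLIntegral_const, Real.volume_Ico]
    -- lower bound for μ [0, b)
    have hD : ENNReal.ofReal (C₀/2 * b^(-α)) * ENNReal.ofReal (b/2) ≤ μ (Set.Ico 0 b) := by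
      have hsub : Set.Ico (b/2) b ⊆ Set.Ico 0 b :=
        Set.Ico_subset_Ico (by linarith) le_rfl
      refine le_trans ?_ (measure_mono hsub)
      rw [hIco]
      calc ENNReal.ofReal (C₀/2 * b^(-α)) * ENNReal.ofReal (b/2)
          = ∫⁻ _ in Set.Ico (b/2) b, ENNReal.ofReal (C₀/2 * b^(-α)) := by
            rw [setLIntegral_const, Real.volume_Ico, show b - b/2 = b/2 by ring]
        _ ≤ ∫⁻ x in Set.Ico (b/2) b, ENNReal.ofReal (h x) := by
            refine setLIntegral_mono hmeas' fun x hx => ?_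
            refine ENNReal.ofReal_le_ofReal ?_
            have hx0 : 0 < x := lt_of_lt_of_le (by linarith) hx.1
            refine le_trans ?_ (hδ x hx0 (lt_of_lt_of_le hx.2 hbδ.le)).1
            have : b^(-α) ≤ x^(-α) :=
              Real.rpow_le_rpow_of_nonpos hx0 hx.2.le (by linarith)
            nlinarith
    -- finiteness of μ [0, b)
    have hDfin : μ (Set.Ico 0 b) < ⊤ := by
      rw [hIco, setLIntegral_congr (Ioo_ae_eq_Ico (μ := volume) (a := 0) (b := b)).symm]
      have hint : IntegrableOn (fun x : ℝ => 3/2 * C₀ * x^(-α)) (Set.Ioo 0 b) := by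
        exact ((intervalIntegral.integrableOn_Ioo_rpow_iff hb0).mpr (by linarith)).const_mul _
      refine lt_of_le_of_lt ?_ hint.setLIntegral_lt_top
      refine setLIntegral_mono (by fun_prop) fun x hx => ?_
      exact ENNReal.ofReal_le_ofReal (hδ x hx.1 (lt_of_lt_of_le hx.2 hbδ.le)).2
    have hNfin : μ (Set.Ico a b) < ⊤ :=
      lt_of_le_of_lt (measure_mono (Set.Ico_subset_Ico (by linarith) le_rfl)) hDfin
    have hAfin : μ (Set.Ico 0 a) < ⊤ :=
      lt_of_le_of_lt (measure_mono (Set.Ico_subset_Ico le_rfl hab.le)) hDfin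
    -- positivity of μ [0, b) in ℝ
    have hDpos : 0 < (μ (Set.Ico 0 b)).toReal := by
      refine ENNReal.toReal_pos ?_ hDfin.ne
      intro h0
      rw [h0] at hD
      have h1 : 0 < C₀/2 * b^(-α) :=
        mul_pos (by linarith) (Real.rpow_pos_of_pos hb0 _)
      have h2 : 0 < b/2 := by linarith
      simp only [nonpos_iff_eq_zero, mul_eq_zero, ENNReal.ofReal_eq_zero] at hD
      rcases hD with h' | h' <;> linarith
    -- toReal bounds
    have hNr : (μ (Set.Ico a b)).toReal ≤ 3/2 * C₀ * a^(-α) * (b - a) := by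
      have h1 : (ENNReal.ofReal (3/2 * C₀ * a^(-α)) * ENNReal.ofReal (b - a)).toReal
          = 3/2 * C₀ * a^(-α) * (b - a) := by
        rw [ENNReal.toReal_mul,
          ENNReal.toReal_ofReal (mul_nonneg (by linarith) (Real.rpow_nonneg ha.le _)),
          ENNReal.toReal_ofReal (by linarith)]
      exact h1 ▸ ENNReal.toReal_mono (by finiteness) hN
    have hDr : C₀/2 * b^(-α) * (b/2) ≤ (μ (Set.Ico 0 b)).toReal := by
      have h1 : (ENNReal.ofReal (C₀/2 * b^(-α)) * ENNReal.ofReal (b/2)).toReal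
          = C₀/2 * b^(-α) * (b/2) := by
        rw [ENNReal.toReal_mul,
          ENNReal.toReal_ofReal (mul_nonneg (by linarith) (Real.rpow_nonneg hb0.le _)),
          ENNReal.toReal_ofReal (by linarith)]
      exact h1 ▸ ENNReal.toReal_mono hDfin.ne hD
    -- additivity
    have hadd : (μ (Set.Ico 0 b)).toReal
        = (μ (Set.Ico 0 a)).toReal + (μ (Set.Ico a b)).toReal := by
      rw [← Set.Ico_union_Ico_eq_Ico ha.le hab.le,
        measure_union Set.Ico_disjoint_Ico_same measurableSet_Ico,
        ENNReal.toReal_add hAfin.ne hNfin.ne]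
    constructor
    · field_simp
      linarith [hadd]
    · -- the quotient bound
      have hbma : b - a = 2^α * a^(1+α) := by rw [hbdef]; ring
      have hN2 : (μ (Set.Ico a b)).toReal ≤ 3/2 * C₀ * 2^α * a := by
        refine le_trans hNr ?_
        rw [hbma]
        have hmul : a^(-α) * a^(1+α) = a := by
          rw [← Real.rpow_add ha]; norm_num
        linear_combination (3/2 * C₀ * 2^α) * hmul
      have hD2 : C₀/4 * a^(1-α) ≤ (μ (Set.Ico 0 b)).toReal := by
        refine le_trans ?_ hDr
        have h1 : b^(-α) * (b/2) = b^(1-α)/2 := by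
          have : b^(1-α) = b * b^(-α) := by
            rw [Real.rpow_sub hb0, Real.rpow_one, Real.rpow_neg hb0.le, div_eq_mul_inv]
          rw [this]; ring
        have h2 : a^(1-α) ≤ b^(1-α) :=
          Real.rpow_le_rpow ha.le hab.le (by linarith)
        nlinarith
      have hgoal : (3/2 * C₀ * 2^α * a) / (C₀/4 * a^(1-α)) = 6 * 2^α * a^α := by
        have hmul : a^α * a^(1-α) = a := by
          rw [← Real.rpow_add ha]; norm_num
        have hne : C₀/4 * a^(1-α) ≠ 0 :=
          (mul_pos (by linarith) (Real.rpow_pos_of_pos ha _)).ne'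
        rw [div_eq_iff hne]
        linear_combination (-(3/2) * C₀ * 2^α) * hmul
      calc (μ (Set.Ico a b)).toReal / (μ (Set.Ico 0 b)).toReal
          ≤ (3/2 * C₀ * 2^α * a) / (C₀/4 * a^(1-α)) := by
            refine div_le_div₀ (by positivity) hN2 (by positivity) hD2
        _ = 6 * 2^α * a^α := hgoal
  -- the squeeze
  have hmem : Set.Ioo (0:ℝ) a₀ ∈ nhdsWithin (0:ℝ) (Set.Ioi 0) :=
    Ioo_mem_nhdsGT_of_mem ⟨le_rfl, ha₀0⟩
  have htend0 : Tendsto (fun a : ℝ =>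
      (μ (Set.Ico a (a + 2^α * a^(1+α)))).toReal
        / (μ (Set.Ico 0 (a + 2^α * a^(1+α)))).toReal)
      (nhdsWithin 0 (Set.Ioi 0)) (nhds 0) := by
    have hup : Tendsto (fun a : ℝ => 6 * 2^α * a^α) (nhdsWithin 0 (Set.Ioi 0)) (nhds 0) := by
      have h1 : Tendsto (fun a : ℝ => a^α) (nhds 0) (nhds ((0:ℝ)^α)) :=
        (Real.continuousAt_rpow_const 0 α (Or.inr hα0.le)).tendsto
      rw [Real.zero_rpow hα0.ne'] at h1
      have h2 : Tendsto (fun a : ℝ => a^α) (nhdsWithin 0 (Set.Ioi 0)) (nhds 0) :=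
        h1.mono_left nhdsWithin_le_nhds
      simpa using h2.const_mul (6 * 2^α)
    refine squeeze_zero' ?_ ?_ hup
    · filter_upwards with a; positivity
    · filter_upwards [hmem] with a ha
      exact (key a ha.1 ha.2).2
  have : Tendsto (fun a : ℝ => 1 - (μ (Set.Ico a (a + 2^α * a^(1+α)))).toReal
        / (μ (Set.Ico 0 (a + 2^α * a^(1+α)))).toReal)
      (nhdsWithin 0 (Set.Ioi 0)) (nhds 1) := by
    simpa using (tendsto_const_nhds (x := (1:ℝ))).sub htend0
  refine this.congr' ?_
  filter_upwards [hmem] with a ha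
  exact ((key a ha.1 ha.2).1).symm
end

section
/- Condition D'_q fails at the neutral fixed point: let α ∈ (0,1), μ the acip of the LSV map f, and Uₙ = [0,bₙ) with μ(Uₙ) ∼ τ/n for fixed τ > 0. Then with aₙ defined by f(aₙ) = bₙ, one has Uₙ ∩ f^{−1}(Uₙ) ⊇ [0,aₙ) and n·μ(Uₙ ∩ f^{−1}(Uₙ)) ≥ n·μ([0,aₙ)), which is bounded below by a positive constant for all large n (since μ([0,aₙ)) ∼_c aₙ^{1−α} ∼_c 1/n). -/
/-!
Near the neutral fixed point the invariant density behaves like `C₀ x^{-α}`, so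
`μ([0,x)) ≍ x^{1-α}` for small `x`, with constants `C₀/(2(1-α))` and `2C₀/(1-α)`.
Since `f(x) = x(1 + (2x)^α) ≤ 2x` on `[0,1/2]`, we have `bₙ ≤ 2aₙ`, hence
`μ([0,aₙ)) ≳ aₙ^{1-α} ≳ bₙ^{1-α} ≳ μ([0,bₙ)) ∼ τ/n`. The bounds apply because
`μ([0,bₙ)) → 0` forces `bₙ → 0`. Finally `f` is increasing on `[0,aₙ]` and fixes `0`,
so `[0,aₙ)` lies in `Uₙ ∩ f⁻¹(Uₙ)`.
-/

open Set Filter Topology MeasureTheory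
open scoped ENNReal

theorem Ico_subset_inter_preimage_Ico {X : Type*} [PartialOrder X] {f : X → X} {p a b : X}
    (hf : StrictMonoOn f (Icc p a)) (hfp : f p = p) (hab : a ≤ b) (hfa : f a = b) :
    Ico p a ⊆ Ico p b ∩ f ⁻¹' Ico p b := by
  rintro x ⟨hpx, hxa⟩
  have hx : x ∈ Icc p a := ⟨hpx, hxa.le⟩
  refine ⟨⟨hpx, hxa.trans_le hab⟩, ?_, ?_⟩
  · exact hfp ▸ hf.monotoneOn ⟨le_rfl, hpx.trans hxa.le⟩ hx hpx
  · exact hfa ▸ hf hx ⟨hpx.trans hxa.le, le_rfl⟩ hxa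

section LSVBranch

variable {α : ℝ}

theorem strictMonoOn_mul_one_add_mul_rpow (hα : 0 ≤ α) {k : ℝ} (hk : 0 ≤ k) :
    StrictMonoOn (fun x : ℝ => x * (1 + k * x ^ α)) (Ici 0) := by
  intro x hx y hy hxy
  have hxα : x ^ α ≤ y ^ α := Real.rpow_le_rpow hx hxy.le hα
  have hyα : 0 ≤ y ^ α := Real.rpow_nonneg hy α
  calc x * (1 + k * x ^ α) ≤ x * (1 + k * y ^ α) := by gcongr
    _ < y * (1 + k * y ^ α) := by gcongr

theorem mul_one_add_two_rpow_mul_rpow_le (hα : 0 ≤ α) {x : ℝ} (hx₀ : 0 ≤ x) (hx : x ≤ 1 / 2) :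
    x * (1 + 2 ^ α * x ^ α) ≤ 2 * x := by
  have h2x : 2 ^ α * x ^ α ≤ 1 := by
    rw [← Real.mul_rpow zero_le_two hx₀]
    exact Real.rpow_le_one (by positivity) (by linarith) hα
  nlinarith

end LSVBranch

section DensityBounds

variable {α : ℝ}

theorem lintegral_Ioo_zero_ofReal_mul_rpow_neg (hα : α < 1) {c x : ℝ} (hc : 0 ≤ c)
    (hx : 0 ≤ x) :
    ∫⁻ t in Ioo 0 x, ENNReal.ofReal (c * t ^ (-α)) =
      ENNReal.ofReal (c / (1 - α) * x ^ (1 - α)) := by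
  have hα' : -1 < -α := by linarith
  have hint : IntegrableOn (fun t : ℝ => c * t ^ (-α)) (Ioo 0 x) :=
    ((intervalIntegral.intervalIntegrable_rpow' hα').1.mono_set Ioo_subset_Ioc_self).const_mul c
  rw [← ofReal_integral_eq_lintegral_ofReal hint]
  · rw [integral_const_mul, ← integral_Ioc_eq_integral_Ioo,
      ← intervalIntegral.integral_of_le hx, integral_rpow (Or.inl hα'),
      Real.zero_rpow (by linarith), show -α + 1 = 1 - α by ring]
    congr 1
    ring
  · filter_upwards [ae_restrict_mem measurableSet_Ioo] with t ht
    exact mul_nonneg hc (Real.rpow_nonneg ht.1.le _)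

theorem ofReal_le_withDensity_Ico_zero (hα : α < 1) {c x : ℝ} {h : ℝ → ℝ} (hc : 0 ≤ c)
    (hx : 0 ≤ x) (hh : ∀ t ∈ Ioo 0 x, c * t ^ (-α) ≤ h t) :
    ENNReal.ofReal (c / (1 - α) * x ^ (1 - α)) ≤
      volume.withDensity (fun t => ENNReal.ofReal (h t)) (Ico 0 x) := by
  rw [withDensity_apply _ measurableSet_Ico, ← lintegral_Ioo_zero_ofReal_mul_rpow_neg hα hc hx]
  calc ∫⁻ t in Ioo 0 x, ENNReal.ofReal (c * t ^ (-α))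
      ≤ ∫⁻ t in Ioo 0 x, ENNReal.ofReal (h t) :=
        setLIntegral_mono' measurableSet_Ioo fun t ht => ENNReal.ofReal_le_ofReal (hh t ht)
    _ ≤ ∫⁻ t in Ico 0 x, ENNReal.ofReal (h t) := lintegral_mono_set Ioo_subset_Ico_self

theorem withDensity_Ico_zero_le_ofReal (hα : α < 1) {c x : ℝ} {h : ℝ → ℝ} (hc : 0 ≤ c)
    (hx : 0 ≤ x) (hh : ∀ t ∈ Ioo 0 x, h t ≤ c * t ^ (-α)) :
    volume.withDensity (fun t => ENNReal.ofReal (h t)) (Ico 0 x) ≤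
      ENNReal.ofReal (c / (1 - α) * x ^ (1 - α)) := by
  rw [withDensity_apply _ measurableSet_Ico, ← lintegral_Ioo_zero_ofReal_mul_rpow_neg hα hc hx,
    ← setLIntegral_congr Ioo_ae_eq_Ico]
  exact setLIntegral_mono' measurableSet_Ioo fun t ht => ENNReal.ofReal_le_ofReal (hh t ht)

theorem exists_rpow_neg_bounds_of_tendsto {C : ℝ} {h : ℝ → ℝ} (hC : 0 < C)
    (hlim : Tendsto (fun x : ℝ => h x * x ^ α) (𝓝[>] 0) (𝓝 C)) :
    ∃ δ > 0, ∀ t ∈ Ioo 0 δ, C / 2 * t ^ (-α) ≤ h t ∧ h t ≤ 2 * C * t ^ (-α) := by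
  have hev : ∀ᶠ x in 𝓝[>] 0, h x * x ^ α ∈ Ioo (C / 2) (2 * C) :=
    hlim (Ioo_mem_nhds (by linarith) (by linarith))
  obtain ⟨δ, hδ, hsub⟩ := mem_nhdsGT_iff_exists_Ioo_subset.1 hev
  refine ⟨δ, hδ, fun t ht => ?_⟩
  have hmem : h t * t ^ α ∈ Ioo (C / 2) (2 * C) := hsub ht
  have htα : 0 < t ^ α := Real.rpow_pos_of_pos ht.1 α
  rw [Real.rpow_neg ht.1.le, ← div_eq_mul_inv, ← div_eq_mul_inv, div_le_iff₀ htα,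
    le_div_iff₀ htα]
  exact ⟨hmem.1.le, hmem.2.le⟩

theorem toReal_withDensity_Ico_zero_le_of_le_two_mul (hα : α < 1) {C δ x y : ℝ} {h : ℝ → ℝ}
    (hC : 0 < C) (hh : ∀ t ∈ Ioo 0 δ, C / 2 * t ^ (-α) ≤ h t ∧ h t ≤ 2 * C * t ^ (-α))
    (hy : 0 < y) (hyx : y ≤ x) (hxy : x ≤ 2 * y) (hxδ : x < δ) :
    (1 / 2) ^ (1 - α) / 4 *
        (volume.withDensity (fun t => ENNReal.ofReal (h t)) (Ico 0 x)).toReal ≤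
      (volume.withDensity (fun t => ENNReal.ofReal (h t)) (Ico 0 y)).toReal := by
  have h1α : 0 < 1 - α := by linarith
  have hx : 0 ≤ x := hy.le.trans hyx
  have hup := withDensity_Ico_zero_le_ofReal hα (by positivity : 0 ≤ 2 * C) hx
    fun t ht => (hh t ⟨ht.1, ht.2.trans hxδ⟩).2
  have hlow := ofReal_le_withDensity_Ico_zero hα (by positivity : 0 ≤ C / 2) hy.le
    fun t ht => (hh t ⟨ht.1, ht.2.trans_le (hyx.trans hxδ.le)⟩).1
  have hyfin := ne_top_of_le_ne_top (ne_top_of_le_ne_top ENNReal.ofReal_ne_top hup)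
    (measure_mono (Ico_subset_Ico_right hyx))
  have hxpow : x ^ (1 - α) ≤ 2 ^ (1 - α) * y ^ (1 - α) := by
    rw [← Real.mul_rpow zero_le_two hy.le]
    exact Real.rpow_le_rpow hx hxy h1α.le
  have hhalf : (1 / 2 : ℝ) ^ (1 - α) * 2 ^ (1 - α) = 1 := by
    rw [← Real.mul_rpow (by norm_num) zero_le_two]; norm_num
  calc (1 / 2) ^ (1 - α) / 4 *
        (volume.withDensity (fun t => ENNReal.ofReal (h t)) (Ico 0 x)).toReal
      ≤ (1 / 2) ^ (1 - α) / 4 * (2 * C / (1 - α) * (2 ^ (1 - α) * y ^ (1 - α))) := by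
        gcongr
        exact (ENNReal.toReal_le_of_le_ofReal (by positivity) hup).trans (by gcongr)
    _ = (1 / 2 : ℝ) ^ (1 - α) * 2 ^ (1 - α) * (C / 2 / (1 - α) * y ^ (1 - α)) := by ring
    _ ≤ _ := by
        rw [hhalf, one_mul]
        exact (ENNReal.ofReal_le_iff_le_toReal hyfin).1 hlow

end DensityBounds

theorem tendsto_zero_of_tendsto_natCast_mul_toReal {u : ℕ → ℝ≥0∞} {τ : ℝ} (hτ : 0 < τ)
    (hu : Tendsto (fun n : ℕ => (n : ℝ) * (u n).toReal) atTop (𝓝 τ)) :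
    Tendsto u atTop (𝓝 0) := by
  have hfin : ∀ᶠ n in atTop, u n ≠ ⊤ :=
    (hu.eventually (eventually_gt_nhds hτ)).mono fun n hn htop => by simp [htop] at hn
  have hreal : Tendsto (fun n => (u n).toReal) atTop (𝓝 0) := by
    refine (hu.div_atTop tendsto_natCast_atTop_atTop).congr' ?_
    filter_upwards [eventually_ne_atTop 0] with n hn
    exact mul_div_cancel_left₀ _ (Nat.cast_ne_zero.2 hn)
  have hofReal := ENNReal.tendsto_ofReal hreal
  rw [ENNReal.ofReal_zero] at hofReal
  exact hofReal.congr' (hfin.mono fun n hn => ENNReal.ofReal_toReal hn)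

theorem eventually_lt_of_tendsto_measure_Ico_zero {ι : Type*} {l : Filter ι} {ν : Measure ℝ}
    {b : ι → ℝ} {ε : ℝ} (hε : 0 < ν (Ico 0 ε))
    (hb : Tendsto (fun i => ν (Ico 0 (b i))) l (𝓝 0)) :
    ∀ᶠ i in l, b i < ε := by
  filter_upwards [hb.eventually (gt_mem_nhds hε)] with i hi
  by_contra! hle
  exact (hi.trans_le (measure_mono (Ico_subset_Ico_right hle))).false

theorem Dq_prime_fails_at_neutral_fixed_point_general
    (α C₀ τ : ℝ) (hα : α ∈ Set.Ioo (0:ℝ) 1) (hC₀ : 0 < C₀) (hτ : 0 < τ)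
    (f : ℝ → ℝ)
    (hf : ∀ x : ℝ, f x = if x < 1/2 then x * (1 + 2^α * x^α) else 2*x - 1)
    (h : ℝ → ℝ)
    (hlim : Tendsto (fun x : ℝ => h x * x^α) (nhdsWithin 0 (Set.Ioi 0)) (nhds C₀))
    (μ : Measure ℝ)
    (hμ : μ = volume.withDensity (fun x => ENNReal.ofReal (h x)))
    (b a : ℕ → ℝ)
    (hb : ∀ n, b n ∈ Set.Ioo (0:ℝ) (1/2))
    (ha : ∀ n, a n ∈ Set.Ioo (0:ℝ) (b n))
    (hfa : ∀ n, f (a n) = b n)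
    (hU : Tendsto (fun n : ℕ => (n : ℝ) * (μ (Set.Ico 0 (b n))).toReal)
      atTop (nhds τ)) :
    (∀ n, Set.Ico (0:ℝ) (a n) ⊆ Set.Ico (0:ℝ) (b n) ∩ f ⁻¹' (Set.Ico (0:ℝ) (b n))) ∧
    (∃ c : ℝ, 0 < c ∧ ∃ N : ℕ, ∀ n ≥ N,
      c ≤ (n : ℝ) * (μ (Set.Ico (0:ℝ) (b n) ∩ f ⁻¹' (Set.Ico (0:ℝ) (b n)))).toReal ∧
      (n : ℝ) * (μ (Set.Ico (0:ℝ) (a n))).toReal ≤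
        (n : ℝ) * (μ (Set.Ico (0:ℝ) (b n) ∩ f ⁻¹' (Set.Ico (0:ℝ) (b n)))).toReal) := by
  obtain ⟨hα₀, hα₁⟩ := hα
  subst hμ
  have hbranch : ∀ x < 1 / 2, f x = x * (1 + 2 ^ α * x ^ α) := fun x hx => by rw [hf, if_pos hx]
  have ha_half : ∀ n, a n < 1 / 2 := fun n => (ha n).2.trans (hb n).2
  have hincl : ∀ n, Ico 0 (a n) ⊆ Ico 0 (b n) ∩ f ⁻¹' Ico 0 (b n) := fun n =>
    Ico_subset_inter_preimage_Ico
      (((strictMonoOn_mul_one_add_mul_rpow hα₀.le (by positivity)).mono Icc_subset_Ici_self).congr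
        fun x hx => (hbranch x (hx.2.trans_lt (ha_half n))).symm)
      (by simp [hbranch 0 (by norm_num)]) (ha n).2.le (hfa n)
  have hab : ∀ n, b n ≤ 2 * a n := fun n => by
    rw [← hfa n, hbranch _ (ha_half n)]
    exact mul_one_add_two_rpow_mul_rpow_le hα₀.le (ha n).1.le (ha_half n).le
  obtain ⟨δ, hδ, hh⟩ := exists_rpow_neg_bounds_of_tendsto hC₀ hlim
  have hδ_pos := (ENNReal.ofReal_pos.2 (by have := sub_pos.2 hα₁; positivity)).trans_le
    (ofReal_le_withDensity_Ico_zero hα₁ (by positivity) hδ.le fun t ht => (hh t ht).1)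
  have hμb := tendsto_zero_of_tendsto_natCast_mul_toReal hτ hU
  obtain ⟨N, hN⟩ := eventually_atTop.1 <| (hU.eventually (eventually_gt_nhds (half_lt_self hτ))).and
    <| (eventually_lt_of_tendsto_measure_Ico_zero hδ_pos hμb).and
      (hμb.eventually (gt_mem_nhds ENNReal.zero_lt_top))
  refine ⟨hincl, (1 / 2) ^ (1 - α) / 4 * (τ / 2), by positivity, N, fun n hn => ?_⟩
  obtain ⟨hτn, hbδ, hfin⟩ := hN n hn
  have hcmp := toReal_withDensity_Ico_zero_le_of_le_two_mul hα₁ hC₀ hh (ha n).1 (ha n).2.le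
    (hab n) hbδ
  have hsub := ENNReal.toReal_mono (ne_top_of_le_ne_top hfin.ne (measure_mono inter_subset_left))
    (measure_mono (hincl n))
  refine ⟨?_, by gcongr⟩
  calc (1 / 2) ^ (1 - α) / 4 * (τ / 2)
      ≤ (1 / 2) ^ (1 - α) / 4 * ((n : ℝ) *
          (volume.withDensity (fun t => ENNReal.ofReal (h t)) (Ico 0 (b n))).toReal) := by
        gcongr
    _ = n * ((1 / 2) ^ (1 - α) / 4 *
          (volume.withDensity (fun t => ENNReal.ofReal (h t)) (Ico 0 (b n))).toReal) := by ring
    _ ≤ _ := by gcongr; exact hcmp.trans hsub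

/-- Failure of `D'_q` at the neutral fixed point: for the LSV map `f` with acip `μ`
(density `h`, `h(x) x^α → C₀ > 0`), `Uₙ = [0,bₙ)` with `μ(Uₙ) ∼ τ/n` and
`f(aₙ) = bₙ`, one has `[0,aₙ) ⊆ Uₙ ∩ f⁻¹(Uₙ)`, and `n·μ(Uₙ ∩ f⁻¹(Uₙ))` is bounded
below by a positive constant for all large `n`. -/
theorem Dq_prime_fails_at_neutral_fixed_point
    (α C₀ τ : ℝ) (hα : α ∈ Set.Ioo (0:ℝ) 1) (hC₀ : 0 < C₀) (hτ : 0 < τ)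
    (f : ℝ → ℝ)
    (hf : ∀ x : ℝ, f x = if x < 1/2 then x * (1 + 2^α * x^α) else 2*x - 1)
    (h : ℝ → ℝ) (hmeas : Measurable h)
    (hpos : ∀ x ∈ Set.Ioc (0:ℝ) 1, 0 < h x)
    (hlim : Tendsto (fun x : ℝ => h x * x^α) (nhdsWithin 0 (Set.Ioi 0)) (nhds C₀))
    (μ : Measure ℝ)
    (hμ : μ = volume.withDensity (fun x => ENNReal.ofReal (h x)))
    (b a : ℕ → ℝ)
    (hb : ∀ n, b n ∈ Set.Ioo (0:ℝ) (1/2))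
    (ha : ∀ n, a n ∈ Set.Ioo (0:ℝ) (b n))
    (hfa : ∀ n, f (a n) = b n)
    (hU : Tendsto (fun n : ℕ => (n : ℝ) * (μ (Set.Ico 0 (b n))).toReal)
      atTop (nhds τ)) :
    (∀ n, Set.Ico (0:ℝ) (a n) ⊆ Set.Ico (0:ℝ) (b n) ∩ f ⁻¹' (Set.Ico (0:ℝ) (b n))) ∧
    (∃ c : ℝ, 0 < c ∧ ∃ N : ℕ, ∀ n ≥ N,
      c ≤ (n : ℝ) * (μ (Set.Ico (0:ℝ) (b n) ∩ f ⁻¹' (Set.Ico (0:ℝ) (b n)))).toReal ∧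
      (n : ℝ) * (μ (Set.Ico (0:ℝ) (a n))).toReal ≤
        (n : ℝ) * (μ (Set.Ico (0:ℝ) (b n) ∩ f ⁻¹' (Set.Ico (0:ℝ) (b n)))).toReal) :=
  Dq_prime_fails_at_neutral_fixed_point_general α C₀ τ hα hC₀ hτ f hf h hlim μ hμ b a hb ha hfa hU
end
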